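/- The number of non-crossing equivalence relations (non-crossing partitions) on a linearly ordered set of n elements equals the Catalan number C_n = (1/(n+1))·binomial(2n, n). In particular, for n = 5 there are 42 such partitions. -/

import Mathlib

/-!
Identify a partition with its equivalence relation `r`. If `r` is non-crossing on `{0, …, n}` and
`m` is the least positive element related to `0` (`m = n + 1` if there is none), then no class
meets both `{1, …, m - 1}` and `{m, …, n}`: a class containing `p < m ≤ q` would cross the class
of `0` and `m` (or contain `0`, if `q = m`). So `r` amounts to a pair of arbitrary non-crossing
relations on these two intervals, with `0` glued to the class of `m`, and the numbers of
non-crossing partitions satisfy the Catalan recurrence `N (n + 1) = ∑ k ≤ n, N k * N (n - k)`.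
-/

/-- A partition of `Fin n` (as a `Finpartition` of `univ`) is non-crossing if
there are no `a < b < c < d` with `a, c` in one block and `b, d` in a different block. -/
def IsNoncrossing {n : ℕ} (P : Finpartition (Finset.univ : Finset (Fin n))) : Prop :=
  ∀ s ∈ P.parts, ∀ t ∈ P.parts, s ≠ t →
    ¬ ∃ a b c d : Fin n, a ∈ s ∧ c ∈ s ∧ b ∈ t ∧ d ∈ t ∧ a < b ∧ b < c ∧ c < d


open Finset

variable {α β : Type*}

def Noncrossing [LT α] (r : α → α → Prop) : Prop :=
  ∀ ⦃a b c d⦄, a < b → b < c → c < d → r a c → r b d → r a b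

abbrev NoncrossingSetoid (α : Type*) [LT α] : Type _ := {s : Setoid α // Noncrossing s}

theorem Noncrossing.comap [Preorder α] [Preorder β] {r : α → α → Prop} (h : Noncrossing r)
    {f : β → α} (hf : StrictMono f) : Noncrossing fun x y => r (f x) (f y) :=
  fun _ _ _ _ hab hbc hcd => h (hf hab) (hf hbc) (hf hcd)

def NoncrossingSetoid.comap [Preorder α] [Preorder β] {f : β → α} (hf : StrictMono f)
    (s : NoncrossingSetoid α) : NoncrossingSetoid β :=
  ⟨s.1.comap f, s.2.comap hf⟩

instance [Finite α] : Finite (Setoid α) :=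
  Finite.of_injective (fun s : Setoid α => ⇑s) fun _ _ h =>
    Setoid.ext fun a b => Iff.of_eq (congrFun₂ h a b)

namespace Finpartition

variable [DecidableEq α]

theorem image_part {s : Finset α} (P : Finpartition s) : s.image P.part = P.parts := by
  ext t
  simp only [mem_image]
  exact ⟨fun ⟨a, ha, hat⟩ => hat ▸ P.part_mem.2 ha, fun ht => P.part_surjOn ht⟩

variable [Fintype α]

noncomputable def equivSetoid : Finpartition (univ : Finset α) ≃ Setoid α where
  toFun P := Setoid.ker P.part
  invFun s := haveI := Classical.decRel s; ofSetoid s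
  left_inv P := by
    classical
    have hpart : ∀ a, (ofSetoid (Setoid.ker P.part)).part a = P.part a := fun a => by
      ext b
      rw [mem_part_ofSetoid_iff_rel, Setoid.ker_def,
        P.mem_part_iff_part_eq_part (mem_univ b) (mem_univ a), eq_comm]
    ext1
    rw [← image_part, ← image_part, image_congr fun a _ => hpart a]
  right_inv s := Setoid.ext fun a b => by
    classical
    rw [Setoid.ker_def, ← Finpartition.mem_part_iff_part_eq_part _ (mem_univ a) (mem_univ b),
      mem_part_ofSetoid_iff_rel, s.comm']

end Finpartition

theorem isNoncrossing_iff_noncrossing_ker {n : ℕ} (P : Finpartition (univ : Finset (Fin n))) :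
    IsNoncrossing P ↔ Noncrossing (Setoid.ker P.part) := by
  constructor
  · intro h a b c d hab hbc hcd hac hbd
    by_contra hne
    rw [Setoid.ker_def] at hac hbd
    refine h _ (P.part_mem.2 (mem_univ a)) _ (P.part_mem.2 (mem_univ b)) hne
      ⟨a, b, c, d, P.mem_part (mem_univ a), ?_, P.mem_part (mem_univ b), ?_, hab, hbc, hcd⟩
    · exact hac ▸ P.mem_part (mem_univ c)
    · exact hbd ▸ P.mem_part (mem_univ d)
  · rintro h s hs t ht hst ⟨a, b, c, d, has, hcs, hbt, hdt, hab, hbc, hcd⟩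
    have hsa := P.part_eq_of_mem hs has
    have htb := P.part_eq_of_mem ht hbt
    refine hst (hsa.symm.trans ((Setoid.ker_def.1 (h hab hbc hcd ?_ ?_)).trans htb))
    · exact hsa.trans (P.part_eq_of_mem hs hcs).symm
    · exact htb.trans (P.part_eq_of_mem ht hdt).symm

theorem card_noncrossing_finpartition (n : ℕ) :
    Nat.card {P : Finpartition (univ : Finset (Fin n)) // IsNoncrossing P} =
      Nat.card (NoncrossingSetoid (Fin n)) :=
  Nat.card_congr (Finpartition.equivSetoid.subtypeEquiv isNoncrossing_iff_noncrossing_ker)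

section RemoveZero

variable {n : ℕ}

def SplitsAt (s : Setoid (Fin n)) (i : ℕ) : Prop :=
  ∀ a b : Fin n, (a : ℕ) < i → i ≤ (b : ℕ) → ¬ s a b

open Classical

/-- `firstLinked r = k.castSucc` when `k.succ` is the least positive element `r`-related to `0`,
and `firstLinked r = Fin.last n` when `{0}` is a class of `r`. -/
noncomputable def firstLinked (r : Setoid (Fin (n + 1))) : Fin (n + 1) :=
  Fin.find (fun i => ∀ k : Fin n, k.castSucc = i → r 0 k.succ)
    ⟨Fin.last n, fun k hk => absurd hk (Fin.castSucc_ne_last k)⟩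

variable {r : Setoid (Fin (n + 1))}

theorem rel_zero_of_castSucc_eq_firstLinked {k : Fin n} (hk : k.castSucc = firstLinked r) :
    r 0 k.succ :=
  Fin.find_spec (p := fun i => ∀ k : Fin n, k.castSucc = i → r 0 k.succ) _ k hk

theorem not_rel_zero_of_castSucc_lt_firstLinked {k : Fin n} (hk : k.castSucc < firstLinked r) :
    ¬ r 0 k.succ := fun h =>
  Fin.find_min _ hk fun _ hk' => Fin.castSucc_injective n hk' ▸ h

theorem firstLinked_le {k : Fin n} (h : r 0 k.succ) : firstLinked r ≤ k.castSucc :=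
  Fin.find_le fun _ hk' => Fin.castSucc_injective n hk' ▸ h

theorem exists_castSucc_eq_firstLinked {k : Fin n} (h : r 0 k.succ) :
    ∃ m : Fin n, m.castSucc = firstLinked r :=
  Fin.exists_castSucc_eq.2 ((firstLinked_le h).trans_lt (Fin.castSucc_lt_last k)).ne

theorem firstLinked_eq {i : Fin (n + 1)} (h₁ : ∀ k : Fin n, k.castSucc = i → r 0 k.succ)
    (h₂ : ∀ k : Fin n, k.castSucc < i → ¬ r 0 k.succ) : firstLinked r = i := by
  refine le_antisymm (Fin.find_le h₁) (not_lt.1 fun hlt => ?_)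
  obtain ⟨k, hk⟩ := Fin.exists_castSucc_eq.2 (hlt.trans_le (Fin.le_last i)).ne
  exact h₂ k (hk ▸ hlt) (rel_zero_of_castSucc_eq_firstLinked hk)

theorem rel_zero_succ_iff {b : Fin n} :
    r 0 b.succ ↔ ∃ k : Fin n, k.castSucc = firstLinked r ∧ r k.succ b.succ := by
  refine ⟨fun h => ?_, fun ⟨k, hk, hkb⟩ => r.trans' (rel_zero_of_castSucc_eq_firstLinked hk) hkb⟩
  obtain ⟨k, hk⟩ := exists_castSucc_eq_firstLinked h
  exact ⟨k, hk, r.trans' (r.symm' (rel_zero_of_castSucc_eq_firstLinked hk)) h⟩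

theorem splitsAt_firstLinked (hr : Noncrossing r) :
    SplitsAt (r.comap Fin.succ) (firstLinked r) := by
  intro a b ha hb hab
  rw [Setoid.comap_rel] at hab
  obtain ⟨k, hk⟩ := Fin.exists_castSucc_eq.2 fun (h : firstLinked r = Fin.last n) => by
    rw [h, Fin.val_last] at hb
    omega
  have hk' : (k : ℕ) = firstLinked r := by rw [← hk, Fin.val_castSucc]
  have h0k := rel_zero_of_castSucc_eq_firstLinked hk
  refine not_rel_zero_of_castSucc_lt_firstLinked (k := a) (by rw [Fin.lt_def]; exact ha) ?_
  rcases (Fin.le_def.2 (hk' ▸ hb) : k ≤ b).eq_or_lt with rfl | hkb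
  · exact r.trans' h0k (r.symm' hab)
  · exact hr (Fin.succ_pos a) (Fin.succ_lt_succ_iff.2 (Fin.lt_def.2 (hk' ▸ ha)))
      (Fin.succ_lt_succ_iff.2 hkb) h0k hab

/-- The setoid `s` on `{1, …, n}`, with `0` added to the class of `k.succ` when `i = k.castSucc`,
and as a singleton class when `i = Fin.last n`. -/
def attachZero (s : Setoid (Fin n)) (i : Fin (n + 1)) : Setoid (Fin (n + 1)) :=
  Setoid.ker (Fin.cons (Fin.lastCases none (fun k => some (Quotient.mk s k)) i)
    (fun b => some (Quotient.mk s b)) : Fin (n + 1) → Option (Quotient s))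

variable {s : Setoid (Fin n)} {i : Fin (n + 1)}

theorem attachZero_succ_succ {a b : Fin n} : attachZero s i a.succ b.succ ↔ s a b := by
  rw [attachZero, Setoid.ker_def]
  simp [Quotient.eq]

theorem attachZero_zero_succ {b : Fin n} :
    attachZero s i 0 b.succ ↔ ∃ k : Fin n, k.castSucc = i ∧ s k b := by
  rw [attachZero, Setoid.ker_def]
  cases i using Fin.lastCases <;> simp [Quotient.eq]

theorem comap_succ_attachZero : (attachZero s i).comap Fin.succ = s :=
  Setoid.ext fun _ _ => attachZero_succ_succ

theorem firstLinked_attachZero (hs : SplitsAt s i) : firstLinked (attachZero s i) = i := by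
  refine firstLinked_eq (fun k hk => attachZero_zero_succ.2 ⟨k, hk, s.refl' k⟩) fun k hk h => ?_
  obtain ⟨m, rfl, hmk⟩ := attachZero_zero_succ.1 h
  exact hs k m (Fin.castSucc_lt_castSucc_iff.1 hk) le_rfl (s.symm' hmk)

theorem attachZero_comap_succ_firstLinked : attachZero (r.comap Fin.succ) (firstLinked r) = r := by
  refine Setoid.ext fun x y => ?_
  cases x using Fin.cases <;> cases y using Fin.cases
  · exact iff_of_true (Setoid.refl' _ 0) (r.refl' 0)
  · exact attachZero_zero_succ.trans rel_zero_succ_iff.symm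
  · rw [Setoid.comm', r.comm']
    exact attachZero_zero_succ.trans rel_zero_succ_iff.symm
  · exact attachZero_succ_succ

theorem Noncrossing.attachZero (hs : Noncrossing s) (hsplit : SplitsAt s i) :
    Noncrossing (attachZero s i) := by
  intro a b c d hab hbc hcd hac hbd
  obtain ⟨b, rfl⟩ := Fin.exists_succ_eq.2 ((Fin.zero_le a).trans_lt hab).ne'
  obtain ⟨c, rfl⟩ := Fin.exists_succ_eq.2 ((Fin.zero_le a).trans_lt (hab.trans hbc)).ne'
  obtain ⟨d, rfl⟩ :=
    Fin.exists_succ_eq.2 ((Fin.zero_le a).trans_lt ((hab.trans hbc).trans hcd)).ne'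
  rw [Fin.succ_lt_succ_iff] at hbc hcd
  rw [attachZero_succ_succ] at hbd
  cases a using Fin.cases with
  | zero =>
    obtain ⟨k, rfl, hkc⟩ := attachZero_zero_succ.1 hac
    refine attachZero_zero_succ.2 ⟨k, rfl, ?_⟩
    have hkc' : k ≤ c := not_lt.1 fun h => hsplit c k h le_rfl (s.symm' hkc)
    rcases lt_trichotomy b k with hbk | rfl | hkb
    · exact absurd hbd (hsplit b d hbk (by simp only [Fin.val_castSucc]; omega))
    · exact s.refl' b
    · exact hs hkb hbc hcd hkc hbd
  | succ a =>
    rw [attachZero_succ_succ] at hac ⊢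
    exact hs (Fin.succ_lt_succ_iff.1 hab) hbc hcd hac hbd

noncomputable def NoncrossingSetoid.finSuccEquiv :
    NoncrossingSetoid (Fin (n + 1)) ≃
      {p : Fin (n + 1) × NoncrossingSetoid (Fin n) // SplitsAt p.2.1 p.1} where
  toFun r := ⟨(firstLinked r.1, r.comap Fin.strictMono_succ), splitsAt_firstLinked r.2⟩
  invFun p := ⟨attachZero p.1.2.1 p.1.1, p.1.2.2.attachZero p.2⟩
  left_inv _ := Subtype.ext attachZero_comap_succ_firstLinked
  right_inv p := Subtype.ext (Prod.ext (firstLinked_attachZero p.2)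
    (Subtype.ext comap_succ_attachZero))

end RemoveZero

section Append

variable {k j : ℕ}

def appendSetoid (s : Setoid (Fin k)) (t : Setoid (Fin j)) : Setoid (Fin (k + j)) :=
  Setoid.ker (Fin.append (fun a => Sum.inl (Quotient.mk s a)) (fun b => Sum.inr (Quotient.mk t b)))

variable {s : Setoid (Fin k)} {t : Setoid (Fin j)}

@[simp]
theorem appendSetoid_castAdd_castAdd {a a' : Fin k} :
    appendSetoid s t (Fin.castAdd j a) (Fin.castAdd j a') ↔ s a a' := by
  rw [appendSetoid, Setoid.ker_def]
  simp [Quotient.eq]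

@[simp]
theorem appendSetoid_natAdd_natAdd {b b' : Fin j} :
    appendSetoid s t (Fin.natAdd k b) (Fin.natAdd k b') ↔ t b b' := by
  rw [appendSetoid, Setoid.ker_def]
  simp [Quotient.eq]

@[simp]
theorem not_appendSetoid_castAdd_natAdd {a : Fin k} {b : Fin j} :
    ¬ appendSetoid s t (Fin.castAdd j a) (Fin.natAdd k b) := by
  rw [appendSetoid, Setoid.ker_def]
  simp

@[simp]
theorem not_appendSetoid_natAdd_castAdd {a : Fin k} {b : Fin j} :
    ¬ appendSetoid s t (Fin.natAdd k b) (Fin.castAdd j a) := by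
  rw [appendSetoid, Setoid.ker_def]
  simp

theorem splitsAt_appendSetoid : SplitsAt (appendSetoid s t) k := by
  intro x y hx hy
  cases x using Fin.addCases <;> cases y using Fin.addCases <;>
    simp only [Fin.val_castAdd, Fin.val_natAdd, not_appendSetoid_castAdd_natAdd,
      not_false_eq_true] at hx hy ⊢ <;>
    omega

theorem Noncrossing.appendSetoid (hs : Noncrossing s) (ht : Noncrossing t) :
    Noncrossing (appendSetoid s t) := by
  have hlt : ∀ (a : Fin k) (b : Fin j), ¬ Fin.natAdd k b < Fin.castAdd j a := fun a b h => by
    rw [Fin.lt_def, Fin.val_natAdd, Fin.val_castAdd] at h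
    omega
  intro a b c d hab hbc hcd hac hbd
  cases a using Fin.addCases <;> cases b using Fin.addCases <;> cases c using Fin.addCases <;>
    cases d using Fin.addCases <;>
    simp only [appendSetoid_castAdd_castAdd, appendSetoid_natAdd_natAdd,
      not_appendSetoid_castAdd_natAdd, not_appendSetoid_natAdd_castAdd,
      (Fin.strictMono_castAdd j).lt_iff_lt, Fin.natAdd_lt_natAdd_iff] at hab hbc hcd hac hbd ⊢
  all_goals first
    | exact hs hab hbc hcd hac hbd
    | exact ht hab hbc hcd hac hbd
    | exact absurd hab (hlt _ _)
    | exact absurd hbc (hlt _ _)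

theorem appendSetoid_comap {s : Setoid (Fin (k + j))} (h : SplitsAt s k) :
    appendSetoid (s.comap (Fin.castAdd j)) (s.comap (Fin.natAdd k)) = s := by
  refine Setoid.ext fun x y => ?_
  cases x using Fin.addCases with
  | left a =>
    cases y using Fin.addCases with
    | left a' => exact appendSetoid_castAdd_castAdd
    | right b => exact iff_of_false not_appendSetoid_castAdd_natAdd (h _ _ (by simp) (by simp))
  | right b =>
    cases y using Fin.addCases with
    | left a =>
      exact iff_of_false not_appendSetoid_natAdd_castAdd
        fun hba => h _ _ (by simp) (by simp) (s.symm' hba)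
    | right b' => exact appendSetoid_natAdd_natAdd

def NoncrossingSetoid.splitsAtEquiv (k j : ℕ) :
    {s : NoncrossingSetoid (Fin (k + j)) // SplitsAt s.1 k} ≃
      NoncrossingSetoid (Fin k) × NoncrossingSetoid (Fin j) where
  toFun s := (s.1.comap (Fin.strictMono_castAdd j), s.1.comap (Fin.strictMono_natAdd k))
  invFun p := ⟨⟨appendSetoid p.1.1 p.2.1, p.1.2.appendSetoid p.2.2⟩, splitsAt_appendSetoid⟩
  left_inv s := Subtype.ext (Subtype.ext (appendSetoid_comap s.2))
  right_inv _ := Prod.ext (Subtype.ext (Setoid.ext fun _ _ => appendSetoid_castAdd_castAdd))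
    (Subtype.ext (Setoid.ext fun _ _ => appendSetoid_natAdd_natAdd))

end Append

theorem card_splitsAt {n k j : ℕ} (h : k + j = n) :
    Nat.card {s : NoncrossingSetoid (Fin n) // SplitsAt s.1 k} =
      Nat.card (NoncrossingSetoid (Fin k)) * Nat.card (NoncrossingSetoid (Fin j)) := by
  subst h
  rw [Nat.card_congr (NoncrossingSetoid.splitsAtEquiv k j), Nat.card_prod]

theorem card_noncrossingSetoid_fin_succ (n : ℕ) :
    Nat.card (NoncrossingSetoid (Fin (n + 1))) =
      ∑ i : Fin (n + 1), Nat.card (NoncrossingSetoid (Fin i)) *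
        Nat.card (NoncrossingSetoid (Fin (n - i))) := by
  rw [Nat.card_congr (NoncrossingSetoid.finSuccEquiv.trans
    (Equiv.subtypeProdEquivSigmaSubtype fun (i : Fin (n + 1)) (s : NoncrossingSetoid (Fin n)) =>
      SplitsAt s.1 i)), Nat.card_sigma]
  exact sum_congr rfl fun i _ => card_splitsAt (by omega)

theorem card_noncrossingSetoid_fin (n : ℕ) :
    Nat.card (NoncrossingSetoid (Fin n)) = catalan n := by
  induction n using Nat.strong_induction_on with
  | _ n ih =>
    cases n with
    | zero =>
      rw [catalan_zero]
      refine Nat.card_eq_one_iff_unique.2 ⟨⟨fun _ _ => ?_⟩, ⟨⟨⊥, fun a => a.elim0⟩⟩⟩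
      exact Subtype.ext (Setoid.ext fun a => a.elim0)
    | succ n =>
      rw [card_noncrossingSetoid_fin_succ, catalan_succ]
      exact sum_congr rfl fun i _ => by rw [ih i (by omega), ih (n - i) (by omega)]

/-- The number of non-crossing partitions of a linearly ordered `n`-element set is the
Catalan number `binomial(2n, n) / (n + 1)`; in particular there are 42 of them for `n = 5`. -/
theorem stmt_7 :
    (∀ n : ℕ, Nat.card {P : Finpartition (Finset.univ : Finset (Fin n)) // IsNoncrossing P} =
      Nat.centralBinom n / (n + 1)) ∧
    Nat.card {P : Finpartition (Finset.univ : Finset (Fin 5)) // IsNoncrossing P} = 42 := by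
  have hcard (n : ℕ) :
      Nat.card {P : Finpartition (univ : Finset (Fin n)) // IsNoncrossing P} = catalan n := by
    rw [card_noncrossing_finpartition, card_noncrossingSetoid_fin]
  refine ⟨fun n => by rw [hcard, catalan_eq_centralBinom_div], ?_⟩
  rw [hcard, catalan_eq_centralBinom_div]
  decide
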